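/- arXiv:2204.11412 — 5 statements merged into one kernel-verified Lean document; each statement's English description precedes it below -/
import Mathlib

section
/- For natural numbers n ≥ k, L ≥ 0, and ε ∈ [0,1], the first-block success probability Pr_suc of the (n,k,L) MDP sliding code (Eq. (4)) satisfies Pr_suc ≥ F((L+1)(n-k); (L+1)n, ε), where F(t;m,ε) = ∑_{r=0}^{t} C(m,r)(1-ε)^{m-r}ε^r. -/
/-!
Expand the block-code probability over per-block erasure counts `δ₀, …, δ_L`: a sum of `L + 1`
independent `Bin(n, ε)` counts is `Bin((L + 1) n, ε)`, as one reads off from the coefficients of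
`(ε X + 1 - ε) ^ ((L + 1) n)`. If the total count is at most `(L + 1)(n - k)`, the least stage `l`
whose prefix count `δ₀ + ⋯ + δ_l` is at most `(l + 1)(n - k)` is a term of Eq. (4), so the block
event is covered by the union of the stage events. The stage-`l` event only involves the first
`l + 1` blocks, and the remaining blocks sum out because each `Bin(n, ε)` has total mass one.
-/

/-- Binomial pmf `f(r;m,ε) = C(m,r)(1-ε)^{m-r}ε^r`. -/
noncomputable def binPMF (m r : ℕ) (ε : ℝ) : ℝ :=
  (m.choose r : ℝ) * (1 - ε) ^ (m - r) * ε ^ r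

/-- Binomial cdf `F(t;m,ε) = ∑_{r=0}^{t} f(r;m,ε)`. -/
noncomputable def binCDF (m t : ℕ) (ε : ℝ) : ℝ :=
  ∑ r ∈ Finset.range (t + 1), binPMF m r ε

open Classical in
/-- First-block success probability of the `(n,k,L)` MDP sliding code (Eq. (4)). -/
noncomputable def prSuc (n k L : ℕ) (ε : ℝ) : ℝ :=
  ∑ l ∈ Finset.range (L + 1),
    ∑ δ ∈ Fintype.piFinset (fun _ : Fin (l + 1) => Finset.range (n + 1)),
      if (∀ j : Fin (l + 1), (j : ℕ) < l →
            ((j : ℕ) + 1) * (n - k) <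
              ∑ i ∈ Finset.univ.filter (fun i : Fin (l + 1) => (i : ℕ) ≤ (j : ℕ)), δ i)
          ∧ (∑ i, δ i) ≤ (l + 1) * (n - k)
      then ∏ i, binPMF n (δ i) ε
      else 0

open Finset Polynomial

lemma binPMF_nonneg {m r : ℕ} {ε : ℝ} (hε0 : 0 ≤ ε) (hε1 : ε ≤ 1) : 0 ≤ binPMF m r ε := by
  have : 0 ≤ 1 - ε := sub_nonneg.2 hε1
  unfold binPMF
  positivity

lemma sum_C_binPMF_mul_X_pow (n : ℕ) (ε : ℝ) :
    ∑ r ∈ range (n + 1), C (binPMF n r ε) * X ^ r = (C ε * X + C (1 - ε)) ^ n := by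
  rw [add_pow]
  refine sum_congr rfl fun r _ => ?_
  simp only [binPMF, map_mul, map_pow, map_natCast]
  ring

lemma coeff_binomial_pow (n r : ℕ) (ε : ℝ) :
    ((C ε * X + C (1 - ε)) ^ n).coeff r = binPMF n r ε := by
  rw [← sum_C_binPMF_mul_X_pow, finsetSum_coeff]
  simp only [coeff_C_mul_X_pow, sum_ite_eq, mem_range, Nat.lt_succ_iff]
  split_ifs with h
  · rfl
  · simp [binPMF, Nat.choose_eq_zero_of_lt (not_le.1 h)]

lemma sum_binPMF (n : ℕ) (ε : ℝ) : ∑ r ∈ range (n + 1), binPMF n r ε = 1 := by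
  simpa [eval_finsetSum] using congrArg (eval 1) (sum_C_binPMF_mul_X_pow n ε)

lemma binPMF_mul_eq_sum_piFinset (m n r : ℕ) (ε : ℝ) :
    binPMF (m * n) r ε = ∑ δ ∈ Fintype.piFinset (fun _ : Fin m => range (n + 1)),
      if r = ∑ i, δ i then ∏ i, binPMF n (δ i) ε else 0 := by
  rw [← coeff_binomial_pow, Nat.mul_comm, pow_mul, ← sum_C_binPMF_mul_X_pow, ← Fin.prod_const,
    prod_univ_sum, finsetSum_coeff]
  simp only [prod_mul_distrib, ← map_prod, prod_pow_eq_pow_sum, coeff_C_mul_X_pow]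

lemma binCDF_mul_eq_sum_piFinset (m n t : ℕ) (ε : ℝ) :
    binCDF (m * n) t ε = ∑ δ ∈ Fintype.piFinset (fun _ : Fin m => range (n + 1)),
      if ∑ i, δ i ≤ t then ∏ i, binPMF n (δ i) ε else 0 := by
  simp only [binCDF, binPMF_mul_eq_sum_piFinset]
  rw [sum_comm]
  simp only [sum_ite_eq', mem_range, Nat.lt_succ_iff]

lemma sum_piFinset_succ {M α : Type*} [AddCommMonoid M] {m : ℕ} (s : Finset α)
    (F : (Fin (m + 1) → α) → M) :
    ∑ δ ∈ Fintype.piFinset (fun _ : Fin (m + 1) => s), F δ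
      = ∑ δ ∈ Fintype.piFinset (fun _ : Fin m => s), ∑ x ∈ s, F (Fin.snoc δ x) := by
  have := filter_piFinset_eq_map_snocEquiv (fun _ : Fin (m + 1) => s) (fun _ => True)
  simp only [filter_true] at this
  rw [this, sum_map, sum_product, sum_comm]
  rfl

lemma sum_piFinset_mul_prod_take {R α : Type*} [CommSemiring R] (s : Finset α) (f : α → R)
    (hf : ∑ x ∈ s, f x = 1) {l : ℕ} (g : (Fin l → α) → R) {m : ℕ} (h : l ≤ m) :
    ∑ δ ∈ Fintype.piFinset (fun _ : Fin m => s), g (Fin.take l h δ) * ∏ i, f (δ i)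
      = ∑ δ ∈ Fintype.piFinset (fun _ : Fin l => s), g δ * ∏ i, f (δ i) := by
  induction m, h using Nat.le_induction with
  | base => simp only [Fin.take_eq_self]
  | succ m h ih =>
    rw [sum_piFinset_succ, ← ih]
    refine sum_congr rfl fun δ _ => ?_
    have htake (x : α) : Fin.take l (h.trans m.le_succ) (Fin.snoc δ x : Fin (m + 1) → α)
        = Fin.take l h δ := by
      rw [← Fin.take_init, Fin.init_snoc]
    simp only [htake, Fin.prod_univ_castSucc, Fin.snoc_castSucc, Fin.snoc_last, ← mul_sum, hf,
      mul_one]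

lemma sum_filter_val_le_take {M : Type*} [AddCommMonoid M] {l m j : ℕ} (h : l ≤ m) (hj : j < l)
    (δ : Fin m → M) :
    ∑ i ∈ univ.filter (fun i : Fin l => (i : ℕ) ≤ j), Fin.take l h δ i
      = ∑ i ∈ univ.filter (fun i : Fin m => (i : ℕ) ≤ j), δ i := by
  refine sum_bij' (fun i _ => Fin.castLE h i) (fun i hi => ⟨i, by simp at hi; omega⟩)
    ?_ ?_ (fun _ _ => rfl) (fun _ _ => rfl) (fun _ _ => rfl)
  all_goals simp

lemma sum_eq_sum_filter_val_le {M : Type*} [AddCommMonoid M] {m : ℕ} (δ : Fin (m + 1) → M) :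
    ∑ i, δ i = ∑ i ∈ univ.filter (fun i : Fin (m + 1) => (i : ℕ) ≤ m), δ i := by
  rw [filter_true_of_mem fun i _ => Nat.lt_succ_iff.1 i.isLt]

-- The summation range of stage `l` in Eq. (4), with redundancy `c = n - k`.
def IsSuccessPattern (c l : ℕ) (δ : Fin (l + 1) → ℕ) : Prop :=
  (∀ j : Fin (l + 1), (j : ℕ) < l →
      ((j : ℕ) + 1) * c < ∑ i ∈ univ.filter (fun i : Fin (l + 1) => (i : ℕ) ≤ (j : ℕ)), δ i)
    ∧ ∑ i, δ i ≤ (l + 1) * c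

open Classical in
lemma prSuc_eq_sum_isSuccessPattern (n k L : ℕ) (ε : ℝ) :
    prSuc n k L ε = ∑ l : Fin (L + 1),
      ∑ δ ∈ Fintype.piFinset (fun _ : Fin (l + 1) => range (n + 1)),
        if IsSuccessPattern (n - k) l δ then ∏ i, binPMF n (δ i) ε else 0 := by
  rw [prSuc, ← Fin.sum_univ_eq_sum_range]
  exact sum_congr rfl fun l _ => sum_congr rfl fun δ _ => if_congr Iff.rfl rfl rfl

lemma exists_isSuccessPattern_take {c L : ℕ} (δ : Fin (L + 1) → ℕ)
    (hδ : ∑ i, δ i ≤ (L + 1) * c) :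
    ∃ l : Fin (L + 1), IsSuccessPattern c l (Fin.take (l + 1) l.isLt δ) := by
  classical
  have hL : ∑ i ∈ univ.filter (fun i : Fin (L + 1) => (i : ℕ) ≤ L), δ i ≤ (L + 1) * c := by
    rwa [← sum_eq_sum_filter_val_le]
  have hex : ∃ j, ∑ i ∈ univ.filter (fun i : Fin (L + 1) => (i : ℕ) ≤ j), δ i ≤ (j + 1) * c :=
    ⟨L, hL⟩
  have hle : Nat.find hex < L + 1 := Nat.lt_succ_of_le (Nat.find_min' hex hL)
  refine ⟨⟨Nat.find hex, hle⟩, fun j hj => ?_, ?_⟩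
  · rw [sum_filter_val_le_take _ (by omega)]
    exact not_le.1 (Nat.find_min hex hj)
  · rw [sum_eq_sum_filter_val_le, sum_filter_val_le_take _ (Nat.lt_succ_self _)]
    exact Nat.find_spec hex

lemma ite_le_sum_ite {ι R : Type*} [Fintype ι] [Semiring R] [PartialOrder R]
    [IsOrderedRing R] {p : Prop} [Decidable p] {q : ι → Prop} [DecidablePred q]
    (h : p → ∃ i, q i) {a : R} (ha : 0 ≤ a) :
    (if p then a else 0) ≤ ∑ i, if q i then a else 0 := by
  split_ifs with hp
  · obtain ⟨i, hi⟩ := h hp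
    calc a = if q i then a else 0 := (if_pos hi).symm
      _ ≤ ∑ j, if q j then a else 0 :=
        single_le_sum (f := fun j => if q j then a else 0) (fun _ _ => ite_nonneg ha le_rfl)
          (mem_univ i)
  · exact sum_nonneg fun _ _ => ite_nonneg ha le_rfl

theorem stmt4_general (n k L : ℕ) (ε : ℝ) (hε0 : 0 ≤ ε) (hε1 : ε ≤ 1) :
    binCDF ((L + 1) * n) ((L + 1) * (n - k)) ε ≤ prSuc n k L ε := by
  classical
  set w : ∀ {m}, (Fin m → ℕ) → ℝ := fun δ => ∏ i, binPMF n (δ i) ε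
  have hw {m} (δ : Fin m → ℕ) : 0 ≤ w δ := prod_nonneg fun _ _ => binPMF_nonneg hε0 hε1
  have hcover (δ : Fin (L + 1) → ℕ) :=
    ite_le_sum_ite (exists_isSuccessPattern_take (c := n - k) δ) (hw δ)
  have hmarginal (l : Fin (L + 1)) :=
    sum_piFinset_mul_prod_take (range (n + 1)) (binPMF n · ε) (sum_binPMF n ε)
      (fun δ => if IsSuccessPattern (n - k) l δ then 1 else 0) l.isLt
  simp only [ite_mul, one_mul, zero_mul] at hmarginal
  calc binCDF ((L + 1) * n) ((L + 1) * (n - k)) ε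
      = ∑ δ ∈ Fintype.piFinset (fun _ : Fin (L + 1) => range (n + 1)),
          if ∑ i, δ i ≤ (L + 1) * (n - k) then w δ else 0 := binCDF_mul_eq_sum_piFinset ..
    _ ≤ ∑ δ ∈ Fintype.piFinset (fun _ : Fin (L + 1) => range (n + 1)), ∑ l : Fin (L + 1),
          if IsSuccessPattern (n - k) l (Fin.take (l + 1) l.isLt δ) then w δ else 0 :=
        sum_le_sum fun δ _ => hcover δ
    _ = prSuc n k L ε := by
        rw [sum_comm, prSuc_eq_sum_isSuccessPattern]
        exact sum_congr rfl fun l _ => hmarginal l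

/-- The `(n,k,L)` sliding code is at least as reliable as the
`((L+1)n,(L+1)k)` Reed–Solomon block code:
`Pr_suc ≥ F((L+1)(n-k); (L+1)n, ε)`. -/
theorem stmt4 (n k L : ℕ) (hk : k ≤ n) (ε : ℝ) (hε0 : 0 ≤ ε) (hε1 : ε ≤ 1) :
    binCDF ((L + 1) * n) ((L + 1) * (n - k)) ε ≤ prSuc n k L ε :=
  stmt4_general n k L ε hε0 hε1
end

section
/- For natural numbers k, δ and ε ∈ [0,1], the Mode 3 average code length ∑_{r=0}^{δ}(k+δ)·f(r;k+δ,ε) + ∑_{r=δ+1}^{k+δ}(r+k)·f(r;k+δ,ε) equals ∑_{r=0}^{δ}(δ−r)·f(r;k+δ,ε) + k + ε(k+δ), where f(r;m,ε)=C(m,r)(1-ε)^{m-r}ε^r. -/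
open Finset

section BinomialWeights

variable {R : Type*} [CommRing R]

theorem sum_binomial_weights_eq_one (n : ℕ) (p : R) :
    ∑ r ∈ range (n + 1), (n.choose r : R) * (1 - p) ^ (n - r) * p ^ r = 1 := by
  simpa [mul_comm, mul_left_comm] using (add_pow p (1 - p) n).symm

theorem sum_mul_binomial_weights_eq (n : ℕ) (p : R) :
    ∑ r ∈ range (n + 1), (r : R) * ((n.choose r : R) * (1 - p) ^ (n - r) * p ^ r) = n * p := by
  cases n with
  | zero => simp
  | succ m =>
    have hterm (s : ℕ) :
        ((s + 1 : ℕ) : R) * (((m + 1).choose (s + 1) : R) * (1 - p) ^ (m + 1 - (s + 1)) *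
          p ^ (s + 1)) = ((m + 1 : ℕ) : R) * p * ((m.choose s : R) * (1 - p) ^ (m - s) * p ^ s) := by
      have hchoose : ((s + 1 : ℕ) : R) * ((m + 1).choose (s + 1) : R) =
          ((m + 1 : ℕ) : R) * (m.choose s : R) := by
        rw [mul_comm, ← Nat.cast_mul, ← Nat.cast_mul, Nat.add_one_mul_choose_eq]
      rw [Nat.add_sub_add_right, pow_succ]
      linear_combination (1 - p) ^ (m - s) * p ^ s * p * hchoose
    rw [sum_range_succ', Nat.cast_zero, zero_mul, add_zero, sum_congr rfl fun s _ => hterm s,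
      ← mul_sum, sum_binomial_weights_eq_one, mul_one]

theorem sum_add_mul_binomial_weights_eq (n : ℕ) (p c : R) :
    ∑ r ∈ range (n + 1), ((r : R) + c) * ((n.choose r : R) * (1 - p) ^ (n - r) * p ^ r) =
      n * p + c := by
  simp only [add_mul, sum_add_distrib, ← mul_sum, sum_mul_binomial_weights_eq,
    sum_binomial_weights_eq_one, mul_one]

end BinomialWeights

theorem stmt7_general (k δ : ℕ) (ε : ℝ) :
    (∑ r ∈ Finset.range (δ + 1),
        ((k : ℝ) + δ) * (((k + δ).choose r : ℝ) * (1 - ε) ^ (k + δ - r) * ε ^ r)) +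
      ∑ r ∈ Finset.Icc (δ + 1) (k + δ),
        ((r : ℝ) + k) * (((k + δ).choose r : ℝ) * (1 - ε) ^ (k + δ - r) * ε ^ r)
    = (∑ r ∈ Finset.range (δ + 1),
        ((δ : ℝ) - r) * (((k + δ).choose r : ℝ) * (1 - ε) ^ (k + δ - r) * ε ^ r)) +
      (k : ℝ) + ε * ((k : ℝ) + δ) := by
  -- `k + δ = (δ - r) + (r + k)`; the `(r + k)`-parts then fill up the full binomial range.
  have hsplit (w : ℕ → ℝ) : ∑ r ∈ range (δ + 1), ((k : ℝ) + δ) * w r =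
      ∑ r ∈ range (δ + 1), ((δ : ℝ) - r) * w r + ∑ r ∈ range (δ + 1), ((r : ℝ) + k) * w r := by
    rw [← sum_add_distrib]
    exact sum_congr rfl fun r _ => by ring
  rw [hsplit, add_assoc, ← Finset.Ico_add_one_right_eq_Icc, sum_range_add_sum_Ico _ (by omega),
    sum_add_mul_binomial_weights_eq]
  push_cast
  ring

/-- Mode 3 average code length identity, with `f(r;m,ε)=C(m,r)(1-ε)^{m-r}ε^r`:
`∑_{r=0}^{δ}(k+δ)f(r;k+δ,ε) + ∑_{r=δ+1}^{k+δ}(r+k)f(r;k+δ,ε)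
  = ∑_{r=0}^{δ}(δ−r)f(r;k+δ,ε) + k + ε(k+δ)`. -/
theorem stmt7 (k δ : ℕ) (ε : ℝ) (hε0 : 0 ≤ ε) (hε1 : ε ≤ 1) :
    (∑ r ∈ Finset.range (δ + 1),
        ((k : ℝ) + δ) * (((k + δ).choose r : ℝ) * (1 - ε) ^ (k + δ - r) * ε ^ r)) +
      ∑ r ∈ Finset.Icc (δ + 1) (k + δ),
        ((r : ℝ) + k) * (((k + δ).choose r : ℝ) * (1 - ε) ^ (k + δ - r) * ε ^ r)
    = (∑ r ∈ Finset.range (δ + 1),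
        ((δ : ℝ) - r) * (((k + δ).choose r : ℝ) * (1 - ε) ^ (k + δ - r) * ε ^ r)) +
      (k : ℝ) + ε * ((k : ℝ) + δ) :=
  stmt7_general k δ ε
end

section
/- For all natural numbers k ≥ 1, δ ≥ 0 and ε ∈ (0,1), the Mode 2 success probability ∑_{r=0}^{k} f(r;k,ε)·F(δ;r+δ,ε) is strictly increasing in δ, where f(r;k,ε)=C(k,r)(1-ε)^{k-r}ε^r and F(δ;m,ε)=∑_{j=0}^{δ} f(j;m,ε). -/
lemma key16 (ε : ℝ) : ∀ δ m : ℕ, δ ≤ m →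
    ∑ j ∈ Finset.range (δ+2), (((m+1).choose j : ℝ))*(1-ε)^(m+1-j)*ε^j
    = (∑ j ∈ Finset.range (δ+1), ((m.choose j : ℝ))*(1-ε)^(m-j)*ε^j)
      + (m.choose (δ+1) : ℝ)*(1-ε)^(m-δ)*ε^(δ+1) := by
  intro δ
  induction δ with
  | zero =>
    intro m hm
    simp [Finset.sum_range_succ, Nat.choose_one_right, pow_succ]
    ring
  | succ δ ih =>
    intro m hm
    have hδm : δ ≤ m := le_of_lt hm
    rw [Finset.sum_range_succ, ih m hδm]
    rw [show δ+1+1 = δ+2 from rfl, Finset.sum_range_succ, Finset.sum_range_succ]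
    have hp : ((m+1).choose (δ+2) : ℝ) = m.choose (δ+1) + m.choose (δ+2) := by
      exact_mod_cast Nat.choose_succ_succ m (δ+1)
    have h1 : m - δ = (m - (δ+1)) + 1 := by omega
    have h2 : m + 1 - (δ+2) = m - (δ+1) := by omega
    rw [hp, h1, h2, pow_succ, Finset.sum_range_succ, h1, pow_succ]
    ring

/-- The Mode 2 success probability `δ ↦ ∑_{r=0}^{k} f(r;k,ε)·F(δ;r+δ,ε)` is
strictly increasing in the number `δ` of extra redundant packets, where
`f(r;k,ε)=C(k,r)(1-ε)^{k-r}ε^r` and `F(δ;m,ε)=∑_{j=0}^{δ}f(j;m,ε)`. -/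
theorem stmt16 (k : ℕ) (hk : 1 ≤ k) (ε : ℝ) (hε0 : 0 < ε) (hε1 : ε < 1) :
    StrictMono (fun δ : ℕ =>
      ∑ r ∈ Finset.range (k + 1),
        ((k.choose r : ℝ) * (1 - ε) ^ (k - r) * ε ^ r) *
          ∑ j ∈ Finset.range (δ + 1),
            ((r + δ).choose j : ℝ) * (1 - ε) ^ (r + δ - j) * ε ^ j) := by
  have hq : (0:ℝ) < 1 - ε := by linarith
  apply strictMono_nat_of_lt_succ
  intro δ
  have hterm : ∀ r : ℕ,
      ∑ j ∈ Finset.range (δ + 1 + 1),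
        ((r + (δ+1)).choose j : ℝ) * (1 - ε) ^ (r + (δ+1) - j) * ε ^ j
      = (∑ j ∈ Finset.range (δ + 1),
          ((r + δ).choose j : ℝ) * (1 - ε) ^ (r + δ - j) * ε ^ j)
        + ((r + δ).choose (δ+1) : ℝ) * (1 - ε) ^ r * ε ^ (δ+1) := by
    intro r
    have h := key16 ε δ (r + δ) (by omega)
    have e1 : r + (δ+1) = (r + δ) + 1 := by omega
    have e2 : δ + 1 + 1 = δ + 2 := rfl
    have e3 : r + δ - δ = r := by omega
    rw [e1, e2, h, e3]
  apply Finset.sum_lt_sum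
  · intro r _
    rw [hterm r]
    have hw : (0:ℝ) ≤ (k.choose r : ℝ) * (1 - ε) ^ (k - r) * ε ^ r := by positivity
    have hc : (0:ℝ) ≤ ((r + δ).choose (δ+1) : ℝ) * (1 - ε) ^ r * ε ^ (δ+1) := by positivity
    nlinarith [mul_nonneg hw hc]
  · refine ⟨1, Finset.mem_range.mpr (by omega), ?_⟩
    rw [hterm 1]
    have hw : (0:ℝ) < (k.choose 1 : ℝ) * (1 - ε) ^ (k - 1) * ε ^ 1 := by
      have : (0:ℝ) < (k.choose 1 : ℝ) := by
        rw [Nat.choose_one_right]; exact_mod_cast hk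
      positivity
    have hc : (0:ℝ) < ((1 + δ).choose (δ+1) : ℝ) * (1 - ε) ^ 1 * ε ^ (δ+1) := by
      have h1 : (1 + δ).choose (δ+1) = 1 := by rw [Nat.add_comm]; exact Nat.choose_self _
      rw [h1]
      push_cast
      positivity
    nlinarith
end

section
/- For natural numbers k ≥ 1, δ ≥ 1 and ε ∈ (0,1), the Mode 2 success probability exceeds the Mode 1 success probability: ∑_{r=0}^{k} C(k,r)(1-ε)^{k-r}ε^r · F(δ; r+δ, ε) > (1-ε²)^k, where F(δ;m,ε)=∑_{j=0}^{δ}C(m,j)(1-ε)^{m-j}ε^j. -/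
open Finset

lemma binom_one (δ : ℕ) (ε : ℝ) :
    ∑ j ∈ Finset.range (δ + 1), (δ.choose j : ℝ) * (1 - ε) ^ (δ - j) * ε ^ j = 1 := by
  have h := add_pow ε (1 - ε) δ
  simp only [add_sub_cancel, one_pow] at h
  refine Eq.trans ?_ h.symm
  exact Finset.sum_congr rfl fun j hj => by ring

lemma key_le (r δ : ℕ) (ε : ℝ) (hε0 : 0 < ε) (hε1 : ε < 1) :
    (1 - ε) ^ r ≤ ∑ j ∈ Finset.range (δ + 1),
      ((r + δ).choose j : ℝ) * (1 - ε) ^ (r + δ - j) * ε ^ j := by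
  have h1e : (0:ℝ) < 1 - ε := by linarith
  have hrw : (1 - ε) ^ r = ∑ j ∈ Finset.range (δ + 1),
      (δ.choose j : ℝ) * (1 - ε) ^ (r + δ - j) * ε ^ j := by
    calc (1 - ε) ^ r = (1 - ε) ^ r *
        ∑ j ∈ Finset.range (δ + 1), (δ.choose j : ℝ) * (1 - ε) ^ (δ - j) * ε ^ j := by
          rw [binom_one, mul_one]
      _ = _ := by
          rw [Finset.mul_sum]
          refine Finset.sum_congr rfl fun j hj => ?_
          have hjδ : j ≤ δ := Nat.lt_succ_iff.mp (Finset.mem_range.mp hj)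
          rw [show r + δ - j = r + (δ - j) from by omega, pow_add]
          ring
  rw [hrw]
  refine Finset.sum_le_sum fun j hj => ?_
  have hc : (δ.choose j : ℝ) ≤ ((r + δ).choose j : ℝ) := by
    exact_mod_cast Nat.choose_le_choose j (by omega)
  have : (0:ℝ) ≤ (1 - ε) ^ (r + δ - j) * ε ^ j :=
    mul_nonneg (pow_nonneg h1e.le _) (pow_nonneg hε0.le _)
  nlinarith [this]

lemma key_lt (r δ : ℕ) (hr : 1 ≤ r) (hδ : 1 ≤ δ) (ε : ℝ) (hε0 : 0 < ε) (hε1 : ε < 1) :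
    (1 - ε) ^ r < ∑ j ∈ Finset.range (δ + 1),
      ((r + δ).choose j : ℝ) * (1 - ε) ^ (r + δ - j) * ε ^ j := by
  have h1e : (0:ℝ) < 1 - ε := by linarith
  have hrw : (1 - ε) ^ r = ∑ j ∈ Finset.range (δ + 1),
      (δ.choose j : ℝ) * (1 - ε) ^ (r + δ - j) * ε ^ j := by
    calc (1 - ε) ^ r = (1 - ε) ^ r *
        ∑ j ∈ Finset.range (δ + 1), (δ.choose j : ℝ) * (1 - ε) ^ (δ - j) * ε ^ j := by
          rw [binom_one, mul_one]
      _ = _ := by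
          rw [Finset.mul_sum]
          refine Finset.sum_congr rfl fun j hj => ?_
          have hjδ : j ≤ δ := Nat.lt_succ_iff.mp (Finset.mem_range.mp hj)
          rw [show r + δ - j = r + (δ - j) from by omega, pow_add]
          ring
  rw [hrw]
  refine Finset.sum_lt_sum (fun j hj => ?_) ⟨δ, Finset.self_mem_range_succ δ, ?_⟩
  · have hc : (δ.choose j : ℝ) ≤ ((r + δ).choose j : ℝ) := by
      exact_mod_cast Nat.choose_le_choose j (by omega)
    have : (0:ℝ) ≤ (1 - ε) ^ (r + δ - j) * ε ^ j :=
      mul_nonneg (pow_nonneg h1e.le _) (pow_nonneg hε0.le _)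
    nlinarith [this]
  · have hc : (δ.choose δ : ℝ) < ((r + δ).choose δ : ℝ) := by
      have h1 : δ.choose δ = 1 := Nat.choose_self δ
      have h2 : (δ + 1).choose δ ≤ (r + δ).choose δ := Nat.choose_le_choose δ (by omega)
      have h3 : (δ + 1).choose δ = δ + 1 := Nat.choose_succ_self_right δ
      exact_mod_cast by omega
    have hpos : (0:ℝ) < (1 - ε) ^ (r + δ - δ) * ε ^ δ :=
      mul_pos (pow_pos h1e _) (pow_pos hε0 _)
    nlinarith [hpos]

/-- Mode 2 strictly outperforms Mode 1: for `k ≥ 1`, `δ ≥ 1`, `ε ∈ (0,1)`,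
`∑_{r=0}^{k} C(k,r)(1-ε)^{k-r}ε^r · F(δ;r+δ,ε) > (1-ε²)^k`. -/
theorem stmt17 (k δ : ℕ) (hk : 1 ≤ k) (hδ : 1 ≤ δ) (ε : ℝ)
    (hε0 : 0 < ε) (hε1 : ε < 1) :
    (1 - ε ^ 2) ^ k <
      ∑ r ∈ Finset.range (k + 1),
        ((k.choose r : ℝ) * (1 - ε) ^ (k - r) * ε ^ r) *
          ∑ j ∈ Finset.range (δ + 1),
            ((r + δ).choose j : ℝ) * (1 - ε) ^ (r + δ - j) * ε ^ j := by
  have h1e : (0:ℝ) < 1 - ε := by linarith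
  have hLHS : (1 - ε ^ 2) ^ k = ∑ r ∈ Finset.range (k + 1),
      ((k.choose r : ℝ) * (1 - ε) ^ (k - r) * ε ^ r) * (1 - ε) ^ r := by
    have heq : (1:ℝ) - ε ^ 2 = ε * (1 - ε) + (1 - ε) := by ring
    rw [heq, add_pow]
    refine Finset.sum_congr rfl fun r hr => ?_
    rw [mul_pow]
    ring
  rw [hLHS]
  refine Finset.sum_lt_sum (fun r hr => ?_) ⟨k, Finset.self_mem_range_succ k, ?_⟩
  · have hw : (0:ℝ) ≤ (k.choose r : ℝ) * (1 - ε) ^ (k - r) * ε ^ r :=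
      mul_nonneg (mul_nonneg (Nat.cast_nonneg _) (pow_nonneg h1e.le _)) (pow_nonneg hε0.le _)
    exact mul_le_mul_of_nonneg_left (key_le r δ ε hε0 hε1) hw
  · have hw : (0:ℝ) < (k.choose k : ℝ) * (1 - ε) ^ (k - k) * ε ^ k := by
      rw [Nat.choose_self, Nat.sub_self]
      simpa using pow_pos hε0 k
    exact mul_lt_mul_of_pos_left (key_lt k δ hk hδ ε hε0 hε1) hw
end

section
/- For m ≥ 1, t < m and ε ∈ (0,1), the binomial CDF satisfies F(t; m, ε) < F(t + s; m + s, ε) for every s ≥ 1 with t + s ≤ m + s, where F(t;m,ε)=∑_{j=0}^{t}C(m,j)(1-ε)^{m-j}ε^j. -/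
private def Fcdf (ε : ℝ) (m t : ℕ) : ℝ :=
  ∑ j ∈ Finset.range (t + 1), (m.choose j : ℝ) * (1 - ε) ^ (m - j) * ε ^ j

private lemma Fcdf_rec (ε : ℝ) (m t : ℕ) (ht : t < m) :
    Fcdf ε (m + 1) (t + 1) = (1 - ε) * Fcdf ε m (t + 1) + ε * Fcdf ε m t := by
  unfold Fcdf
  rw [Finset.mul_sum, Finset.mul_sum,
    Finset.sum_range_succ' (fun j => ((m + 1).choose j : ℝ) * (1 - ε) ^ (m + 1 - j) * ε ^ j) (t + 1),
    Finset.sum_range_succ' (fun j => (1 - ε) * ((m.choose j : ℝ) * (1 - ε) ^ (m - j) * ε ^ j)) (t + 1)]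
  have h0 : ((m + 1).choose 0 : ℝ) * (1 - ε) ^ (m + 1 - 0) * ε ^ 0
      = (1 - ε) * ((m.choose 0 : ℝ) * (1 - ε) ^ (m - 0) * ε ^ 0) := by
    simp [pow_succ]; ring
  have key : ∀ j ∈ Finset.range (t + 1),
      ((m + 1).choose (j + 1) : ℝ) * (1 - ε) ^ (m + 1 - (j + 1)) * ε ^ (j + 1)
      = (1 - ε) * ((m.choose (j + 1) : ℝ) * (1 - ε) ^ (m - (j + 1)) * ε ^ (j + 1))
        + ε * ((m.choose j : ℝ) * (1 - ε) ^ (m - j) * ε ^ j) := by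
    intro j hj
    have hjt : j ≤ t := Nat.lt_succ_iff.mp (Finset.mem_range.mp hj)
    have h1 : m + 1 - (j + 1) = m - j := by omega
    have h2 : m - j = (m - (j + 1)) + 1 := by omega
    rw [h1, Nat.choose_succ_succ]
    push_cast
    rw [h2, pow_succ, pow_succ]
    ring
  rw [Finset.sum_congr rfl key, Finset.sum_add_distrib]
  linarith [h0]

private lemma Fcdf_step (ε : ℝ) (hε0 : 0 < ε) (hε1 : ε < 1) (m t : ℕ) (ht : t < m) :
    Fcdf ε m t < Fcdf ε (m + 1) (t + 1) := by
  have h1 : Fcdf ε m t < Fcdf ε m (t + 1) := by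
    unfold Fcdf
    conv_rhs => rw [Finset.sum_range_succ]
    have hc : 0 < (m.choose (t + 1) : ℝ) := by
      exact_mod_cast Nat.choose_pos (by omega)
    have hpos : 0 < (m.choose (t + 1) : ℝ) * (1 - ε) ^ (m - (t + 1)) * ε ^ (t + 1) := by
      have := pow_pos (by linarith : (0:ℝ) < 1 - ε) (m - (t + 1))
      have := pow_pos hε0 (t + 1)
      positivity
    linarith
  rw [Fcdf_rec ε m t ht]
  nlinarith

/-- Binomial cdf monotonicity: for `m ≥ 1`, `t < m`, `ε ∈ (0,1)` and every `s ≥ 1`,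
`F(t;m,ε) < F(t+s;m+s,ε)`, where `F(t;m,ε)=∑_{j=0}^{t}C(m,j)(1-ε)^{m-j}ε^j`. -/
theorem stmt18 (m t : ℕ) (hm : 1 ≤ m) (ht : t < m) (ε : ℝ)
    (hε0 : 0 < ε) (hε1 : ε < 1) (s : ℕ) (hs : 1 ≤ s) :
    ∑ j ∈ Finset.range (t + 1), (m.choose j : ℝ) * (1 - ε) ^ (m - j) * ε ^ j
    < ∑ j ∈ Finset.range (t + s + 1),
        ((m + s).choose j : ℝ) * (1 - ε) ^ (m + s - j) * ε ^ j := by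
  show Fcdf ε m t < Fcdf ε (m + s) (t + s)
  induction s, hs using Nat.le_induction with
  | base => exact Fcdf_step ε hε0 hε1 m t ht
  | succ n hn ih =>
    calc Fcdf ε m t < Fcdf ε (m + n) (t + n) := ih
      _ < Fcdf ε (m + (n + 1)) (t + (n + 1)) := by
          have := Fcdf_step ε hε0 hε1 (m + n) (t + n) (by omega)
          convert this using 2 <;> omega
end
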